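/- Fix a finite nonempty vocabulary Σ and set X = List Σ. Let H be a finite nonempty set of functions X → X, let T ≥ 1, let f_1, …, f_T ∈ H, and let f_0 = f_T ∘ ⋯ ∘ f_2 ∘ f_1. Let D_1, …, D_T and D_0 be probability distributions (PMFs) over X, and suppose H is distinguishable with margin ε_0 > 0 under all the relevant input distributions: for all f ≠ g in H, Pr_{x~D_t}[f(x) ≠ g(x)] > ε_0 for every t ∈ {1,…,T}, and Pr_{x~D_0}[f(z_t(x)) ≠ g(z_t(x))] > ε_0 for every t ∈ {1,…,T}, where z_1(x) = x and z_{t}(x) = f_{t−1} ∘ ⋯ ∘ f_1(x) for t ≥ 2. For each t ∈ {1,…,T}, draw k_t i.i.d. inputs from D_t and form the simple-task dataset S_t of pairs (x, f_t(x)); independently draw k_c i.i.d. inputs x_1,…,x_{k_c} from D_0 and form the chain-of-thought composite dataset S_0 of full chains (z_1(x_i), z_2(x_i), …, z_{T+1}(x_i)), where z_{T+1}(x) = f_0(x). Let 0 < δ < 1 and suppose max(k_c, k_t) ≥ (1/ε_0)·(ln|H| + ln(T/δ)) for every t ∈ {1,…,T}. Then with probability at least 1 − δ over all the datasets, for every t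 ∈ {1,…,T}, the only g ∈ H satisfying g(x) = y for all (x,y) ∈ S_t and g(z_t(x_i)) = z_{t+1}(x_i) for all i ∈ {1,…,k_c} is g = f_t; consequently, the learning rule that outputs the composition ĥ_T ∘ ⋯ ∘ ĥ_1 of per-step consistent hypotheses ĥ_t ∈ H outputs exactly f_0. -/

import Mathlib

/-!
Fix a step `t` and a wrong hypothesis `g ∈ H`. By distinguishability, `g` agrees with `f_t` on
a fresh simple-task input, and on the step-`t` pair of a fresh chain, with probability at most
`1 - ε₀`; by independence it survives all samples with probability at most
`(1 - ε₀)^(k_t + k_c) ≤ exp(-ε₀ max(k_c, k_t)) ≤ δ / (T |H|)`. A union bound over the pairs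
`(t, g)` shows that with probability at least `1 - δ` every step is identified, and then every
composition of per-step consistent hypotheses is the target.
-/

/-- `compChain fs` is the composite function `f_T ∘ ⋯ ∘ f_2 ∘ f_1` where `f_{t+1} = fs t`
(i.e. `fs 0` is applied first). -/
def compChain {X : Type*} {T : ℕ} (fs : Fin T → (X → X)) (x : X) : X :=
  (List.ofFn fs).foldl (fun a g => g a) x

/-- `partialChain fs t x` is the intermediate value `z_{t+1}(x) = f_t ∘ ⋯ ∘ f_1 (x)`
of the chain of thought on input `x` (so `partialChain fs 0 x = x`). -/
def partialChain {X : Type*} {T : ℕ} (fs : Fin T → (X → X)) (t : ℕ) (x : X) : X :=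
  ((List.ofFn fs).take t).foldl (fun a g => g a) x

open scoped ENNReal
open MeasureTheory Set

namespace ENNReal

theorem tsum_pi_fin_prod : ∀ {n : ℕ} {π : Fin n → Type*} (F : ∀ i, π i → ℝ≥0∞),
    ∑' f : (∀ i, π i), ∏ i, F i (f i) = ∏ i, ∑' x, F i x
  | 0, _, _ => by simp
  | n + 1, π, F => by
    rw [← (Fin.consEquiv π).tsum_eq, ENNReal.tsum_prod', Fin.prod_univ_succ]
    simp only [Fin.consEquiv_apply, Fin.prod_univ_succ, Fin.cons_zero, Fin.cons_succ]
    simp_rw [ENNReal.tsum_mul_left, tsum_pi_fin_prod (fun i => F i.succ), ENNReal.tsum_mul_right]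

theorem tsum_pi_prod {ι : Type*} [Fintype ι] {π : ι → Type*} (F : ∀ i, π i → ℝ≥0∞) :
    ∑' f : (∀ i, π i), ∏ i, F i (f i) = ∏ i, ∑' x, F i x := by
  let e := (Fintype.equivFin ι).symm
  rw [← (Equiv.piCongrLeft π e).tsum_eq, ← e.prod_comp]
  simp_rw [← e.prod_comp, Equiv.piCongrLeft_apply_apply]
  exact tsum_pi_fin_prod fun j => F (e j)

theorem one_sub_ofReal_pow_le {ε η : ℝ} {m : ℕ} (hε : 0 ≤ ε) (hη : 0 < η)
    (hm : -Real.log η ≤ ε * m) : (1 - ENNReal.ofReal ε) ^ m ≤ ENNReal.ofReal η := by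
  have hexp : 1 - ENNReal.ofReal ε ≤ ENNReal.ofReal (Real.exp (-ε)) := by
    rw [← ENNReal.ofReal_one, ← ENNReal.ofReal_sub _ hε]
    exact ENNReal.ofReal_le_ofReal (by linarith [Real.add_one_le_exp (-ε)])
  calc (1 - ENNReal.ofReal ε) ^ m ≤ ENNReal.ofReal (Real.exp (-ε)) ^ m := by gcongr
    _ = ENNReal.ofReal (Real.exp (-(ε * m))) := by
      rw [← ENNReal.ofReal_pow (Real.exp_pos _).le, ← Real.exp_nat_mul]
      ring_nf
    _ ≤ ENNReal.ofReal η := by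
      rw [← Real.exp_log hη]
      gcongr
      linarith

theorem one_sub_ofReal_pow_le_div_mul {ε δ : ℝ} {T N m : ℕ} (hε : 0 < ε) (hδ : 0 < δ)
    (hT : 0 < T) (hN : 0 < N) (hm : 1 / ε * (Real.log N + Real.log (T / δ)) ≤ m) :
    (1 - ENNReal.ofReal ε) ^ m ≤ ENNReal.ofReal δ / (T * N) := by
  have hT' : (0 : ℝ) < T := Nat.cast_pos.2 hT
  have hN' : (0 : ℝ) < N := Nat.cast_pos.2 hN
  have hlog : -Real.log (δ / (T * N)) = Real.log N + Real.log (T / δ) := by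
    rw [Real.log_div hδ.ne' (by positivity), Real.log_mul hT'.ne' hN'.ne',
      Real.log_div hT'.ne' hδ.ne']
    ring
  rw [one_div_mul_eq_div, div_le_iff₀' hε, ← hlog] at hm
  calc _ ≤ ENNReal.ofReal (δ / (T * N)) := one_sub_ofReal_pow_le hε.le (by positivity) hm
    _ = ENNReal.ofReal δ / (T * N) := by
      rw [ENNReal.ofReal_div_of_pos (by positivity)]
      norm_cast

end ENNReal

namespace PMF

variable {α β : Type*}

noncomputable def pi {ι : Type*} [Fintype ι] {π : ι → Type*} (p : ∀ i, PMF (π i)) :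
    PMF (∀ i, π i) :=
  ⟨fun f => ∏ i, p i (f i), ENNReal.summable.hasSum_iff.2 <| by
    simp only [ENNReal.tsum_pi_prod, PMF.tsum_coe, Finset.prod_const_one]⟩

noncomputable def prod (p : PMF α) (q : PMF β) : PMF (α × β) :=
  ⟨fun x => p x.1 * q x.2, ENNReal.summable.hasSum_iff.2 <| by
    rw [ENNReal.tsum_prod']
    simp only [ENNReal.tsum_mul_left, PMF.tsum_coe, mul_one]⟩

@[simp]
theorem pi_apply {ι : Type*} [Fintype ι] {π : ι → Type*} (p : ∀ i, PMF (π i))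
    (f : ∀ i, π i) :
    pi p f = ∏ i, p i (f i) := rfl

@[simp]
theorem prod_apply (p : PMF α) (q : PMF β) (x : α × β) : p.prod q x = p x.1 * q x.2 := rfl

theorem toOuterMeasure_add_compl (p : PMF α) (s : Set α) :
    p.toOuterMeasure s + p.toOuterMeasure sᶜ = 1 := by
  rw [toOuterMeasure_apply, toOuterMeasure_apply, ← ENNReal.tsum_add, ← p.tsum_coe]
  exact tsum_congr fun x => congrFun (indicator_self_add_compl s p) x

theorem toOuterMeasure_le_one_sub {p : PMF α} {s : Set α} {ε : ℝ≥0∞}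
    (h : ε < p.toOuterMeasure sᶜ) : p.toOuterMeasure s ≤ 1 - ε :=
  ENNReal.le_sub_of_add_le_right (ne_top_of_lt h) <|
    (add_le_add_right h.le _).trans (toOuterMeasure_add_compl p s).le

theorem one_sub_le_toReal_tsum_indicator {p : PMF α} {s : Set α} {δ : ℝ} (hδ : 0 ≤ δ)
    (h : p.toOuterMeasure sᶜ ≤ ENNReal.ofReal δ) :
    1 - δ ≤ (∑' x, s.indicator p x).toReal := by
  rw [← toOuterMeasure_apply]
  have hsum := toOuterMeasure_add_compl p s
  obtain ⟨hs, hsc⟩ := ENNReal.add_ne_top.1 (hsum ▸ ENNReal.one_ne_top)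
  replace hsum := congrArg ENNReal.toReal hsum
  rw [ENNReal.toReal_add hs hsc, ENNReal.toReal_one] at hsum
  linarith [ENNReal.toReal_le_of_le_ofReal hδ h]

theorem toOuterMeasure_pi_univ_pi {ι : Type*} [Fintype ι] {π : ι → Type*}
    (p : ∀ i, PMF (π i)) (s : ∀ i, Set (π i)) :
    (pi p).toOuterMeasure (univ.pi s) = ∏ i, (p i).toOuterMeasure (s i) := by
  classical
  simp only [toOuterMeasure_apply, ← ENNReal.tsum_pi_prod]
  refine tsum_congr fun f => ?_
  simp only [indicator_apply, mem_univ_pi, pi_apply, Finset.prod_ite_zero, Finset.mem_univ,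
    true_imp_iff]

theorem toOuterMeasure_prod_prod (p : PMF α) (q : PMF β) (s : Set α) (t : Set β) :
    (p.prod q).toOuterMeasure (s ×ˢ t) = p.toOuterMeasure s * q.toOuterMeasure t := by
  simp only [toOuterMeasure_apply, ENNReal.tsum_prod', ← ENNReal.tsum_mul_right]
  refine tsum_congr fun a => ?_
  rw [← ENNReal.tsum_mul_left]
  refine tsum_congr fun b => ?_
  by_cases ha : a ∈ s <;> by_cases hb : b ∈ t <;> simp [ha, hb]

theorem toOuterMeasure_pi_eval_preimage {ι : Type*} [Fintype ι] [DecidableEq ι]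
    {π : ι → Type*} (p : ∀ i, PMF (π i)) (j : ι) (s : Set (π j)) :
    (pi p).toOuterMeasure (Function.eval j ⁻¹' s) = (p j).toOuterMeasure s := by
  rw [eval_preimage, toOuterMeasure_pi_univ_pi, Finset.prod_eq_single j]
  · simp
  · intro i _ hij
    simp [Function.update_of_ne hij, toOuterMeasure_apply_eq_one_iff]
  · simp

end PMF

theorem partialChain_succ {X : Type*} {T : ℕ} (fs : Fin T → (X → X)) (t : Fin T) (x : X) :
    partialChain fs ((t : ℕ) + 1) x = fs t (partialChain fs t x) := by
  simp [partialChain, List.take_add_one, List.foldl_append, t.isLt]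

section ChainOfThought

variable {X : Type*} {T : ℕ} (fs : Fin T → X → X) (D : Fin T → PMF X) (D₀ : PMF X)
  (k : Fin T → ℕ) (kc : ℕ)

noncomputable def cotSample : PMF ((∀ t, Fin (k t) → X) × (Fin kc → X)) :=
  (PMF.pi fun t => PMF.pi fun _ : Fin (k t) => D t).prod (PMF.pi fun _ : Fin kc => D₀)

def stepConsistent (t : Fin T) (g : X → X) : Set ((∀ t, Fin (k t) → X) × (Fin kc → X)) :=
  {w | (∀ i, g (w.1 t i) = fs t (w.1 t i)) ∧
    ∀ i, g (partialChain fs t (w.2 i)) = partialChain fs ((t : ℕ) + 1) (w.2 i)}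

theorem cotSample_stepConsistent (t : Fin T) (g : X → X) :
    (cotSample D D₀ k kc).toOuterMeasure (stepConsistent fs k kc t g) =
      (D t).toOuterMeasure {x | g x = fs t x} ^ k t *
        D₀.toOuterMeasure {x | g (partialChain fs t x) = fs t (partialChain fs t x)} ^ kc := by
  classical
  have hbox : stepConsistent fs k kc t g =
      (Function.eval t ⁻¹' univ.pi fun _ => {x | g x = fs t x}) ×ˢ
        univ.pi fun _ => {x | g (partialChain fs t x) = fs t (partialChain fs t x)} := by
    ext w
    simp [stepConsistent, partialChain_succ]
  rw [hbox, cotSample, PMF.toOuterMeasure_prod_prod, PMF.toOuterMeasure_pi_eval_preimage,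
    PMF.toOuterMeasure_pi_univ_pi, PMF.toOuterMeasure_pi_univ_pi]
  simp

theorem cotSample_stepConsistent_le {t : Fin T} {g : X → X} {ε : ℝ≥0∞}
    (hD : ε < (D t).toOuterMeasure {x | g x ≠ fs t x})
    (hD₀ : ε <
      D₀.toOuterMeasure {x | g (partialChain fs t x) ≠ fs t (partialChain fs t x)}) :
    (cotSample D D₀ k kc).toOuterMeasure (stepConsistent fs k kc t g) ≤
      (1 - ε) ^ max kc (k t) := by
  rw [cotSample_stepConsistent]
  calc _ ≤ (1 - ε) ^ k t * (1 - ε) ^ kc := by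
        gcongr <;> exact PMF.toOuterMeasure_le_one_sub (by rwa [compl_ofPred])
    _ = (1 - ε) ^ (k t + kc) := (pow_add _ _ _).symm
    _ ≤ (1 - ε) ^ max kc (k t) := pow_le_pow_of_le_one zero_le tsub_le_self (by omega)

end ChainOfThought

theorem expcot_identification_general {V : Type*}
    (H : Finset (List V → List V))
    (T : ℕ) (fs : Fin T → (List V → List V)) (hfs : ∀ t, fs t ∈ H)
    (D : Fin T → PMF (List V)) (D₀ : PMF (List V)) (ε₀ : ℝ) (hε₀ : 0 < ε₀)
    (hdist : ∀ f ∈ H, ∀ g ∈ H, f ≠ g → ∀ t : Fin T,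
      ENNReal.ofReal ε₀ < (D t).toOuterMeasure {x | f x ≠ g x})
    (hdist₀ : ∀ f ∈ H, ∀ g ∈ H, f ≠ g → ∀ t : Fin T,
      ENNReal.ofReal ε₀ <
        D₀.toOuterMeasure {x | f (partialChain fs t x) ≠ g (partialChain fs t x)})
    (k : Fin T → ℕ) (kc : ℕ) (δ : ℝ) (hδ0 : 0 < δ)
    (hk : ∀ t : Fin T,
      (1 / ε₀) * (Real.log H.card + Real.log ((T : ℝ) / δ)) ≤ (max kc (k t) : ℝ)) :
    1 - δ ≤
      (∑' w : ((t : Fin T) → Fin (k t) → List V) × (Fin kc → List V),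
        Set.indicator
          {w : ((t : Fin T) → Fin (k t) → List V) × (Fin kc → List V) |
            (∀ t : Fin T, ∀ g ∈ H,
              ((∀ i, g (w.1 t i) = fs t (w.1 t i)) ∧
                (∀ i, g (partialChain fs t (w.2 i)) =
                  partialChain fs ((t : ℕ) + 1) (w.2 i))) → g = fs t) ∧
            ∀ h : Fin T → (List V → List V),
              (∀ t : Fin T, h t ∈ H ∧
                (∀ i, h t (w.1 t i) = fs t (w.1 t i)) ∧
                (∀ i, h t (partialChain fs t (w.2 i)) =
                  partialChain fs ((t : ℕ) + 1) (w.2 i))) →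
              compChain h = compChain fs}
          (fun w => (∏ t, ∏ i, D t (w.1 t i)) * ∏ i, D₀ (w.2 i)) w).toReal := by
  classical
  set μ := cotSample D D₀ k kc
  have hstep : ∀ t, ∀ g ∈ H.erase (fs t),
      μ.toOuterMeasure (stepConsistent fs k kc t g) ≤ ENNReal.ofReal δ / (T * H.card) := by
    intro t g hg
    obtain ⟨hne, hgH⟩ := Finset.mem_erase.1 hg
    exact (cotSample_stepConsistent_le fs D D₀ k kc (hdist g hgH (fs t) (hfs t) hne t)
      (hdist₀ g hgH (fs t) (hfs t) hne t)).trans <|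
      ENNReal.one_sub_ofReal_pow_le_div_mul hε₀ hδ0 t.pos (Finset.card_pos.2 ⟨g, hgH⟩)
        (by exact_mod_cast hk t)
  have hbad : μ.toOuterMeasure (⋃ t, ⋃ g ∈ H.erase (fs t), stepConsistent fs k kc t g) ≤
      ENNReal.ofReal δ := calc
    _ ≤ ∑ t, ∑ g ∈ H.erase (fs t), μ.toOuterMeasure (stepConsistent fs k kc t g) :=
        (measure_iUnion_fintype_le _ _).trans
          (Finset.sum_le_sum fun t _ => measure_biUnion_finset_le _ _)
    _ ≤ ∑ _t : Fin T, ∑ _g ∈ H, ENNReal.ofReal δ / (T * H.card) := by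
        gcongr with t _
        exact (Finset.sum_le_sum (hstep t)).trans
          (Finset.sum_le_sum_of_subset (Finset.erase_subset _ _))
    _ = (T * H.card) * (ENNReal.ofReal δ / (T * H.card)) := by simp [mul_assoc]
    _ ≤ ENNReal.ofReal δ := ENNReal.mul_div_le
  refine PMF.one_sub_le_toReal_tsum_indicator (p := μ) hδ0.le <|
    (measure_mono (compl_subset_comm.1 ?_)).trans hbad
  intro w hw
  have hident : ∀ t, ∀ g ∈ H, w ∈ stepConsistent fs k kc t g → g = fs t :=
    fun t g hg hcons => by_contra fun hne =>
      hw (mem_iUnion.2 ⟨t, mem_iUnion₂.2 ⟨g, Finset.mem_erase.2 ⟨hne, hg⟩, hcons⟩⟩)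
  exact ⟨hident, fun h hh => by rw [funext fun t => hident t (h t) (hh t).1 (hh t).2]⟩

/-- Learning a `T`-step composition from per-step simple-task examples
(`k t` i.i.d. draws from `D t`, labeled by `f_t = fs t`) together with `k_c`
chain-of-thought composite examples (i.i.d. draws from `D₀`, providing for each step `t`
the pair `(z_t, z_{t+1})`).  If `H` is `ε₀`-distinguishable under each `D t` and under
each pushforward of `D₀` by `z_t`, and `max(k_c, k_t) ≥ (1/ε₀)(ln|H| + ln(T/δ))` for
every `t`, then with probability at least `1 − δ` over all datasets, for every step `t`
the only `g ∈ H` consistent with both the simple-task examples and the step-`t` pairs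
is `fs t`; consequently any composition of per-step consistent hypotheses equals the
target composition `f₀ = compChain fs`. -/
theorem expcot_identification {V : Type*} [Fintype V] [Nonempty V]
    (H : Finset (List V → List V)) (hH : H.Nonempty)
    (T : ℕ) (hT : 1 ≤ T) (fs : Fin T → (List V → List V)) (hfs : ∀ t, fs t ∈ H)
    (D : Fin T → PMF (List V)) (D₀ : PMF (List V)) (ε₀ : ℝ) (hε₀ : 0 < ε₀)
    (hdist : ∀ f ∈ H, ∀ g ∈ H, f ≠ g → ∀ t : Fin T,
      ENNReal.ofReal ε₀ < (D t).toOuterMeasure {x | f x ≠ g x})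
    (hdist₀ : ∀ f ∈ H, ∀ g ∈ H, f ≠ g → ∀ t : Fin T,
      ENNReal.ofReal ε₀ <
        D₀.toOuterMeasure {x | f (partialChain fs t x) ≠ g (partialChain fs t x)})
    (k : Fin T → ℕ) (kc : ℕ) (δ : ℝ) (hδ0 : 0 < δ) (hδ1 : δ < 1)
    (hk : ∀ t : Fin T,
      (1 / ε₀) * (Real.log H.card + Real.log ((T : ℝ) / δ)) ≤ (max kc (k t) : ℝ)) :
    1 - δ ≤
      (∑' w : ((t : Fin T) → Fin (k t) → List V) × (Fin kc → List V),
        Set.indicator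
          {w : ((t : Fin T) → Fin (k t) → List V) × (Fin kc → List V) |
            (∀ t : Fin T, ∀ g ∈ H,
              ((∀ i, g (w.1 t i) = fs t (w.1 t i)) ∧
                (∀ i, g (partialChain fs t (w.2 i)) =
                  partialChain fs ((t : ℕ) + 1) (w.2 i))) → g = fs t) ∧
            ∀ h : Fin T → (List V → List V),
              (∀ t : Fin T, h t ∈ H ∧
                (∀ i, h t (w.1 t i) = fs t (w.1 t i)) ∧
                (∀ i, h t (partialChain fs t (w.2 i)) =
                  partialChain fs ((t : ℕ) + 1) (w.2 i))) →
              compChain h = compChain fs}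
          (fun w => (∏ t, ∏ i, D t (w.1 t i)) * ∏ i, D₀ (w.2 i)) w).toReal :=
  expcot_identification_general H T fs hfs D D₀ ε₀ hε₀ hdist hdist₀ k kc δ hδ0 hk
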